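/- Let H be a complex Hilbert space, B a linear operator with domain Dom(B) ⊆ H, and λ a complex number such that B − λ : Dom(B) → H is bijective. Then a pair of complementary subspaces U and V of H decomposes B if and only if both U and V are invariant for B and both are invariant under the everywhere defined inverse (B − λ)⁻¹ : H → H, i.e. (B − λ)⁻¹U ⊆ U and (B − λ)⁻¹V ⊆ V. -/

import Mathlib

/-!
Put `A = B - λ`: it is injective on `Dom(B)` with right inverse `R`, so `R ∘ A = id` on `Dom(B)`
and `R` is additive. If the domain splits and `R y = u + v` with `y ∈ U`, `u ∈ Dom ∩ U`,
`v ∈ Dom ∩ V`, then `A v = y - A u ∈ U ∩ V = 0`, hence `v = R (A v) = 0` and `R y ∈ U`.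
Conversely, for `x ∈ Dom(B)` split `A x = u + v` along `U ⊕ V`; then `x = R u + R v` with
`R u ∈ Dom ∩ U` and `R v ∈ Dom ∩ V`.
-/

noncomputable section

/-- A subspace `U` of `H` is *invariant* for a linear operator `T` with domain `dom ⊆ H`
if `T x ∈ U` for every `x ∈ dom ∩ U`. -/
def InvariantFor {H : Type*} [AddCommGroup H] [Module ℂ H]
    (T : H →ₗ[ℂ] H) (dom U : Submodule ℂ H) : Prop :=
  ∀ x ∈ dom, x ∈ U → T x ∈ U

section RightInverse

variable {K M : Type*} [Ring K] [AddCommGroup M] [Module K M]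
  {A : M →ₗ[K] M} {dom U V : Submodule K M} {S : M → M}

theorem leftInvOn_of_injOn_of_rightInverse (hA : Set.InjOn A dom)
    (hS : ∀ y, S y ∈ dom ∧ A (S y) = y) : Set.LeftInvOn S A dom :=
  hA.rightInvOn_of_leftInvOn (t := Set.univ) (fun y _ => (hS y).2)
    (Set.mapsTo_univ _ _) (fun y _ => (hS y).1)

theorem map_add_of_injOn_of_rightInverse (hA : Set.InjOn A dom)
    (hS : ∀ y, S y ∈ dom ∧ A (S y) = y) (y z : M) : S (y + z) = S y + S z := by
  have hsum : S y + S z ∈ dom := dom.add_mem (hS y).1 (hS z).1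
  calc S (y + z) = S (A (S y + S z)) := by rw [map_add, (hS y).2, (hS z).2]
    _ = S y + S z := leftInvOn_of_injOn_of_rightInverse hA hS hsum

theorem le_inf_sup_inf_of_rightInverse_mem (hA : Set.InjOn A dom)
    (hS : ∀ y, S y ∈ dom ∧ A (S y) = y) (hsum : U ⊔ V = ⊤)
    (hSU : ∀ y ∈ U, S y ∈ U) (hSV : ∀ y ∈ V, S y ∈ V) :
    dom ≤ dom ⊓ U ⊔ dom ⊓ V := by
  intro x hx
  obtain ⟨u, hu, v, hv, huv⟩ := Submodule.mem_sup.mp (hsum ▸ Submodule.mem_top : A x ∈ U ⊔ V)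
  have hx_eq : x = S u + S v := by
    rw [← map_add_of_injOn_of_rightInverse hA hS, huv,
      leftInvOn_of_injOn_of_rightInverse hA hS hx]
  rw [hx_eq]
  exact Submodule.add_mem_sup ⟨(hS u).1, hSU u hu⟩ ⟨(hS v).1, hSV v hv⟩

end RightInverse

section Invariant

variable {H : Type*} [AddCommGroup H] [Module ℂ H]
  {A : H →ₗ[ℂ] H} {dom U V : Submodule ℂ H} {S : H → H}

theorem InvariantFor.sub_smul_id {B : H →ₗ[ℂ] H} (h : InvariantFor B dom U) (lam : ℂ) :
    InvariantFor (B - lam • LinearMap.id) dom U := fun x hx hxU =>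
  U.sub_mem (h x hx hxU) (U.smul_mem lam hxU)

theorem rightInverse_mem_of_decomposes (hA : Set.InjOn A dom)
    (hS : ∀ y, S y ∈ dom ∧ A (S y) = y) (hU : InvariantFor A dom U)
    (hV : InvariantFor A dom V) (hdisj : U ⊓ V = ⊥) (hdec : dom = dom ⊓ U ⊔ dom ⊓ V)
    {y : H} (hy : y ∈ U) : S y ∈ U := by
  obtain ⟨u, hu, v, hv, huv⟩ := Submodule.mem_sup.mp (hdec ▸ (hS y).1 : S y ∈ dom ⊓ U ⊔ dom ⊓ V)
  have hAv_eq : A v = y - A u := by rw [← (hS y).2, ← huv, map_add, add_sub_cancel_left]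
  have hAv : A v ∈ U ⊓ V := ⟨hAv_eq ▸ U.sub_mem hy (hU u hu.1 hu.2), hV v hv.1 hv.2⟩
  rw [hdisj, Submodule.mem_bot] at hAv
  have hleft := leftInvOn_of_injOn_of_rightInverse hA hS
  have hv0 : v = 0 := calc
    v = S (A v) := (hleft hv.1).symm
    _ = S (A 0) := by rw [hAv, map_zero]
    _ = 0 := hleft dom.zero_mem
  rw [← huv, hv0, add_zero]
  exact hu.2

end Invariant

theorem decomposes_iff_invariant_for_resolvent_general
    {H : Type*} [NormedAddCommGroup H] [InnerProductSpace ℂ H]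
    (B : H →ₗ[ℂ] H) (dom : Submodule ℂ H) (U V : Submodule ℂ H)
    (hsum : U ⊔ V = ⊤) (hdisj : U ⊓ V = ⊥) (lam : ℂ)
    (hbij : Function.Bijective fun x : dom => B (x : H) - lam • (x : H))
    (R : H → H) (hR : ∀ y : H, R y ∈ dom ∧ B (R y) - lam • R y = y) :
    (InvariantFor B dom U ∧ InvariantFor B dom V ∧ dom = dom ⊓ U ⊔ dom ⊓ V) ↔
      (InvariantFor B dom U ∧ InvariantFor B dom V ∧
        (∀ y ∈ U, R y ∈ U) ∧ (∀ y ∈ V, R y ∈ V)) := by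
  set A : H →ₗ[ℂ] H := B - lam • LinearMap.id
  have hA : Set.InjOn A dom := fun x hx x' hx' h =>
    congrArg Subtype.val (hbij.injective (a₁ := ⟨x, hx⟩) (a₂ := ⟨x', hx'⟩) h)
  have hS : ∀ y, R y ∈ dom ∧ A (R y) = y := hR
  constructor
  · rintro ⟨hU, hV, hdec⟩
    have hUA := hU.sub_smul_id lam
    have hVA := hV.sub_smul_id lam
    refine ⟨hU, hV, fun y hy => rightInverse_mem_of_decomposes hA hS hUA hVA hdisj hdec hy,
      fun y hy => rightInverse_mem_of_decomposes hA hS hVA hUA ?_ ?_ hy⟩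
    · rwa [inf_comm]
    · rwa [sup_comm]
  · rintro ⟨hU, hV, hRU, hRV⟩
    exact ⟨hU, hV, le_antisymm (le_inf_sup_inf_of_rightInverse_mem hA hS hsum hRU hRV)
      (sup_le inf_le_left inf_le_left)⟩

/-- Let `B` be an operator with domain `dom` in a Hilbert space `H` and
`lam` a complex number such that `B − lam : dom → H` is bijective, with (everywhere defined)
inverse `R = (B − lam)⁻¹ : H → H`.  A pair of complementary subspaces `U`, `V` decomposes `B`
(i.e. both are invariant for `B` and the domain splits as `dom = (dom ∩ U) + (dom ∩ V)`) if
and only if both `U` and `V` are invariant for `B` and invariant under `R`. -/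
theorem decomposes_iff_invariant_for_resolvent
    {H : Type*} [NormedAddCommGroup H] [InnerProductSpace ℂ H] [CompleteSpace H]
    (B : H →ₗ[ℂ] H) (dom : Submodule ℂ H) (U V : Submodule ℂ H)
    (hsum : U ⊔ V = ⊤) (hdisj : U ⊓ V = ⊥) (lam : ℂ)
    (hbij : Function.Bijective fun x : dom => B (x : H) - lam • (x : H))
    (R : H → H) (hR : ∀ y : H, R y ∈ dom ∧ B (R y) - lam • R y = y) :
    (InvariantFor B dom U ∧ InvariantFor B dom V ∧ dom = dom ⊓ U ⊔ dom ⊓ V) ↔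
      (InvariantFor B dom U ∧ InvariantFor B dom V ∧
        (∀ y ∈ U, R y ∈ U) ∧ (∀ y ∈ V, R y ∈ V)) :=
  decomposes_iff_invariant_for_resolvent_general B dom U V hsum hdisj lam hbij R hR
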